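/- Fix integers n ≥ 2 and 1 ≤ i < n. The number of permutations π̂ of {1, …, n} with the following property — under the Ranking greedy process on MonotoneG with π̂, the vertex of rank i is matched, say to u_j, and the vertex of rank i+1 under π̂ is v_j (for that same index j) — equals a(n−1, i). -/

import Mathlib

open scoped Classical

noncomputable section

/-- The element of `c` minimizing `key`, if `c` is nonempty. -/
def pickMin {n : ℕ} {α : Type*} [LinearOrder α] (key : Fin n → α)
    (c : Finset (Fin n)) : Option (Fin n) :=
  if h : c.Nonempty then some (Classical.choose (Finset.exists_min_image c key h)) else none

/-- The set of matched `V`-vertices after the first `j` arrivals of the online greedy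
process on the bipartite graph with `U`-side arrival order `u_0, u_1, …` and adjacency
`adj`, in which each arriving `u_j` is matched to its currently unmatched neighbor
minimizing `key` (if any). -/
def greedyRun {n : ℕ} {α : Type*} [LinearOrder α] (adj : ℕ → Fin n → Prop)
    (key : Fin n → α) : ℕ → Finset (Fin n)
  | 0 => ∅
  | j + 1 =>
    match pickMin key ((Finset.univ.filter fun i => adj j i) \ greedyRun adj key j) with
    | some v => insert v (greedyRun adj key j)
    | none => greedyRun adj key j

/-- The `V`-vertex that the arriving vertex `u_j` (0-indexed) gets matched to, if any. -/
def greedyMatchU {n : ℕ} {α : Type*} [LinearOrder α] (adj : ℕ → Fin n → Prop)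
    (key : Fin n → α) (j : ℕ) : Option (Fin n) :=
  pickMin key ((Finset.univ.filter fun i => adj j i) \ greedyRun adj key j)

/-- Adjacency of the monotone graph `MonotoneG` (0-indexed):
`u_j` is adjacent to `v_i` iff `j ≤ i`. -/
def monoAdj (n : ℕ) : ℕ → Fin n → Prop := fun j i => j ≤ (i : ℕ)

/-- The set of matched `V`-vertices produced by the Ranking greedy process on `MonotoneG`
with permutation `π` (where `π i` is the rank of `v_i`, 0-indexed). -/
def rankMatched (n : ℕ) (π : Equiv.Perm (Fin n)) : Finset (Fin n) :=
  greedyRun (monoAdj n) (fun i => π i) n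

/-- `x(π)`: the number of edges of the matching produced by Ranking on `MonotoneG`. -/
def xSize (n : ℕ) (π : Equiv.Perm (Fin n)) : ℕ := (rankMatched n π).card

/-- `a(n) = Σ_π x(π)`, over all `n!` permutations. -/
def aVal (n : ℕ) : ℕ := ∑ π : Equiv.Perm (Fin n), xSize n π

/-- `a(n,i)` (with `i` 1-indexed): the number of permutations `π` of `{1,…,n}` for which
the vertex of rank `i` under `π` is matched by the Ranking greedy process on `MonotoneG`. -/
def aIdx (n i : ℕ) : ℕ :=
  (Finset.univ.filter fun π : Equiv.Perm (Fin n) =>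
    ∃ v : Fin n, (π v : ℕ) = i - 1 ∧ v ∈ rankMatched n π).card

/-- `d(m,i)` (with `i` 1-indexed): the number of permutations of `{1,…,m}` all of whose
fixed points (if any) lie among the first `i` items. -/
def dIdx (m i : ℕ) : ℕ :=
  (Finset.univ.filter fun σ : Equiv.Perm (Fin m) => ∀ x, σ x = x → (x : ℕ) < i).card

/-- `d(m)`: the number of derangements of `{1,…,m}`. -/
def numDer (m : ℕ) : ℕ :=
  (Finset.univ.filter fun σ : Equiv.Perm (Fin m) => ∀ x, σ x ≠ x).card

/-- The key for the greedy-by-price process: buy the cheapest available item,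
breaking ties in favor of the smaller index. -/
def priceKey {n : ℕ} (p : Fin n → ℝ) : Fin n → Lex (ℝ × ℕ) := fun i => toLex (p i, (i : ℕ))

/-- The utility `y(u_j)` of buyer `u_j` (0-indexed) in the greedy-by-price process:
`1 - p v` if `u_j` buys item `v`, and `0` if `u_j` remains unmatched. -/
def utility (n : ℕ) (adj : ℕ → Fin n → Prop) (p : Fin n → ℝ) (j : ℕ) : ℝ :=
  (greedyMatchU adj (priceKey p) j).elim 0 (fun v => 1 - p v)

/-- The revenue `r(v)` from item `v` in the greedy-by-price process:
`p v` if `v` is sold, and `0` otherwise. -/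
def revenue (n : ℕ) (adj : ℕ → Fin n → Prop) (p : Fin n → ℝ) (v : Fin n) : ℝ :=
  if v ∈ greedyRun adj (priceKey p) n then p v else 0

/-- The `m`-th harmonic number `H_m = Σ_{i=1}^m 1/i` (with `H_0 = 0`). -/
def harm (m : ℕ) : ℝ := ∑ i ∈ Finset.range m, (1 : ℝ) / (i + 1)

/-!
Delete `u_j` and `v_j` from `π̂` and relabel the remaining vertices and ranks in order, giving
a permutation `σ` of `{1, …, n-1}`. The vertex of rank `i` has index at least `j` and is still
free when `u_j` arrives, and every earlier `u_t` prefers it to `v_j` (of rank `i + 1`); hence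
no `u_t` with `t < j` takes `v_j`, Ranking with `π̂` mimics Ranking with `σ` up to time `j`,
and at time `j` both pick the vertex of rank `i`. Conversely, a `σ` whose vertex of rank `i`
is matched, say at time `s`, comes from exactly one `π̂`: insert a new `u_s v_s` with `v_s` of
rank `i + 1`. So `π̂ ↦ σ` is a bijection onto the permutations counted by `a(n-1, i)`.
-/

section GreedyProcess

variable {N : ℕ} {α : Type*} [LinearOrder α] {key : Fin N → α} {adj : ℕ → Fin N → Prop}
  {c : Finset (Fin N)} {s t : ℕ} {v : Fin N}

lemma pickMin_spec (h : pickMin key c = some v) : v ∈ c ∧ ∀ u ∈ c, key v ≤ key u := by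
  unfold pickMin at h
  split_ifs at h with hc
  cases h
  exact Classical.choose_spec (c.exists_min_image key hc)

lemma pickMin_eq_some (hkey : Function.Injective key) (hv : v ∈ c)
    (hmin : ∀ u ∈ c, key v ≤ key u) : pickMin key c = some v := by
  rw [pickMin, dif_pos ⟨v, hv⟩]
  obtain ⟨hmem, hle⟩ := Classical.choose_spec (c.exists_min_image key ⟨v, hv⟩)
  exact congrArg some (hkey (le_antisymm (hle v hv) (hmin _ hmem)))

lemma pickMin_ne_none (hc : c.Nonempty) : pickMin key c ≠ none := by
  simp [pickMin, hc]

lemma greedyRun_succ_of_greedyMatchU_eq_some (h : greedyMatchU adj key t = some v) :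
    greedyRun adj key (t + 1) = insert v (greedyRun adj key t) := by
  rw [greedyMatchU] at h
  rw [greedyRun, h]

lemma greedyRun_succ_of_greedyMatchU_eq_none (h : greedyMatchU adj key t = none) :
    greedyRun adj key (t + 1) = greedyRun adj key t := by
  rw [greedyMatchU] at h
  rw [greedyRun, h]

lemma greedyRun_monotone : Monotone (greedyRun adj key) := by
  refine monotone_nat_of_le_succ fun t => ?_
  rcases h : greedyMatchU adj key t with _ | v
  · rw [greedyRun_succ_of_greedyMatchU_eq_none h]
  · rw [greedyRun_succ_of_greedyMatchU_eq_some h]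
    exact Finset.subset_insert _ _

lemma mem_greedyRun_of_greedyMatchU_eq_some (h : greedyMatchU adj key s = some v) (hst : s < t) :
    v ∈ greedyRun adj key t :=
  greedyRun_monotone hst (greedyRun_succ_of_greedyMatchU_eq_some h ▸ Finset.mem_insert_self v _)

lemma exists_greedyMatchU_eq_some_of_mem_greedyRun (h : v ∈ greedyRun adj key t) :
    ∃ s < t, greedyMatchU adj key s = some v := by
  induction t with
  | zero => simp [greedyRun] at h
  | succ t ih =>
    rcases hm : greedyMatchU adj key t with _ | u
    · rw [greedyRun_succ_of_greedyMatchU_eq_none hm] at h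
      obtain ⟨s, hs, hsv⟩ := ih h
      exact ⟨s, by omega, hsv⟩
    · rw [greedyRun_succ_of_greedyMatchU_eq_some hm, Finset.mem_insert] at h
      rcases h with rfl | h
      · exact ⟨t, by omega, hm⟩
      · obtain ⟨s, hs, hsv⟩ := ih h
        exact ⟨s, by omega, hsv⟩

lemma greedyMatchU_spec (h : greedyMatchU adj key t = some v) :
    adj t v ∧ v ∉ greedyRun adj key t ∧
      ∀ u, adj t u → u ∉ greedyRun adj key t → key v ≤ key u := by
  obtain ⟨hv, hmin⟩ := pickMin_spec h
  simp only [Finset.mem_sdiff, Finset.mem_filter, Finset.mem_univ, true_and] at hv hmin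
  exact ⟨hv.1, hv.2, fun u hu hu' => hmin u ⟨hu, hu'⟩⟩

lemma greedyMatchU_eq_some_inj (h : greedyMatchU adj key s = some v)
    (h' : greedyMatchU adj key t = some v) : s = t := by
  by_contra hne
  rcases Nat.lt_or_gt_of_ne hne with hlt | hlt
  · exact (greedyMatchU_spec h').2.1 (mem_greedyRun_of_greedyMatchU_eq_some h hlt)
  · exact (greedyMatchU_spec h).2.1 (mem_greedyRun_of_greedyMatchU_eq_some h' hlt)

end GreedyProcess

section RankingOnMonotoneGraph

variable {m : ℕ}

def rankRun (σ : Equiv.Perm (Fin m)) : ℕ → Finset (Fin m) :=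
  greedyRun (monoAdj m) (fun v => σ v)

def rankMatch (σ : Equiv.Perm (Fin m)) : ℕ → Option (Fin m) :=
  greedyMatchU (monoAdj m) (fun v => σ v)

def rankAvail (σ : Equiv.Perm (Fin m)) (t : ℕ) : Finset (Fin m) :=
  (Finset.univ.filter fun v => monoAdj m t v) \ rankRun σ t

variable {σ : Equiv.Perm (Fin m)} {t : ℕ} {u v : Fin m}

lemma mem_rankAvail : v ∈ rankAvail σ t ↔ t ≤ (v : ℕ) ∧ v ∉ rankRun σ t := by
  rw [rankAvail, Finset.mem_sdiff, Finset.mem_filter]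
  simp [monoAdj]

lemma rankRun_succ_of_rankMatch_eq_some (h : rankMatch σ t = some v) :
    rankRun σ (t + 1) = insert v (rankRun σ t) :=
  greedyRun_succ_of_greedyMatchU_eq_some h

lemma rankMatch_eq_some_iff : rankMatch σ t = some v ↔ v ∈ rankAvail σ t ∧
    ∀ u ∈ rankAvail σ t, σ v ≤ σ u :=
  ⟨pickMin_spec, fun h => pickMin_eq_some (fun _ _ h => σ.injective h) h.1 h.2⟩

lemma rankMatch_ne_of_lt (htv : t ≤ (v : ℕ)) (hv : v ∉ rankRun σ t) (hvu : σ v < σ u) :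
    rankMatch σ t ≠ some u := fun h =>
  absurd ((rankMatch_eq_some_iff.mp h).2 v (mem_rankAvail.mpr ⟨htv, hv⟩)) (not_le.mpr hvu)

lemma exists_rankMatch_eq_some (h : (rankAvail σ t).Nonempty) : ∃ v, rankMatch σ t = some v :=
  Option.ne_none_iff_exists'.mp (pickMin_ne_none h)

end RankingOnMonotoneGraph

lemma Equiv.optionCongr_removeNone {α β : Type*} {e : Option α ≃ Option β} (h : e none = none) :
    Equiv.optionCongr (Equiv.removeNone e) = e := by
  ext1 x
  cases x with
  | none => simp [h]
  | some x =>
    have hx : ∃ y, e (some x) = some y :=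
      Option.ne_none_iff_exists'.mp fun hx => Option.some_ne_none x (e.injective (hx.trans h.symm))
    simp [Equiv.removeNone_some e hx]

section InsertPerm

variable {m : ℕ}

def insertPerm (j i : Fin (m + 1)) (σ : Equiv.Perm (Fin m)) : Equiv.Perm (Fin (m + 1)) :=
  (finSuccEquiv' j).trans ((Equiv.optionCongr σ).trans (finSuccEquiv' i).symm)

def erasePerm (i : Fin (m + 1)) (π : Equiv.Perm (Fin (m + 1))) : Equiv.Perm (Fin m) :=
  Equiv.removeNone ((finSuccEquiv' (π.symm i)).symm.trans (π.trans (finSuccEquiv' i)))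

variable (j i : Fin (m + 1)) (σ : Equiv.Perm (Fin m))

@[simp] lemma insertPerm_apply_self : insertPerm j i σ j = i := by
  simp [insertPerm, finSuccEquiv'_at, finSuccEquiv'_symm_none]

@[simp] lemma insertPerm_apply_succAbove (k : Fin m) :
    insertPerm j i σ (j.succAbove k) = i.succAbove (σ k) := by
  simp [insertPerm, finSuccEquiv'_succAbove, finSuccEquiv'_symm_some]

@[simp] lemma insertPerm_symm_apply_self : (insertPerm j i σ).symm i = j := by
  rw [Equiv.symm_apply_eq, insertPerm_apply_self]

lemma insertPerm_erasePerm (π : Equiv.Perm (Fin (m + 1))) :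
    insertPerm (π.symm i) i (erasePerm i π) = π := by
  rw [insertPerm, erasePerm, Equiv.optionCongr_removeNone (by simp [finSuccEquiv'_at])]
  ext1 v
  simp

@[simp] lemma erasePerm_insertPerm : erasePerm i (insertPerm j i σ) = σ := by
  rw [erasePerm, insertPerm_symm_apply_self, ← Equiv.removeNone_optionCongr σ]
  congr 1
  ext1 x
  simp [insertPerm]

end InsertPerm

section Simulation

variable {m : ℕ} {σ : Equiv.Perm (Fin m)} {i j : Fin (m + 1)} {t : ℕ}

lemma le_val_succAbove_iff (ht : t ≤ (j : ℕ)) (k : Fin m) :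
    t ≤ (j.succAbove k : ℕ) ↔ t ≤ (k : ℕ) := by
  rcases lt_or_ge k.castSucc j with h | h
  · rw [Fin.succAbove_of_castSucc_lt _ _ h, Fin.val_castSucc]
  · rw [Fin.succAbove_of_le_castSucc _ _ h, Fin.val_succ]
    have : (j : ℕ) ≤ k := h
    omega

lemma rankAvail_eq_insert_map {π : Equiv.Perm (Fin (m + 1))} (ht : t ≤ (j : ℕ))
    (hrun : rankRun π t = (rankRun σ t).map j.succAboveEmb) :
    rankAvail π t = insert j ((rankAvail σ t).map j.succAboveEmb) := by
  ext v
  rcases eq_or_ne v j with rfl | hv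
  · simp [mem_rankAvail, hrun, ht, Fin.succAbove_ne]
  · obtain ⟨k, rfl⟩ := Fin.exists_succAbove_eq hv
    simp [mem_rankAvail, hrun, le_val_succAbove_iff ht, Fin.succAbove_ne]

lemma rankMatch_of_rankMatch_insertPerm {k : Fin m} (ht : t ≤ (j : ℕ))
    (hrun : rankRun (insertPerm j i σ) t = (rankRun σ t).map j.succAboveEmb)
    (h : rankMatch (insertPerm j i σ) t = some (j.succAbove k)) :
    rankMatch σ t = some k := by
  rw [rankMatch_eq_some_iff, rankAvail_eq_insert_map ht hrun] at h
  obtain ⟨hk, hmin⟩ := h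
  refine rankMatch_eq_some_iff.mpr ⟨?_, fun u hu => ?_⟩
  · simpa [Fin.succAbove_ne] using hk
  · have := hmin (j.succAbove u) (Finset.mem_insert_of_mem (Finset.mem_map_of_mem _ hu))
    simpa using this

lemma rankMatch_insertPerm_of_rankMatch {k : Fin m} (ht : t ≤ (j : ℕ))
    (hrun : rankRun (insertPerm j i σ) t = (rankRun σ t).map j.succAboveEmb)
    (h : rankMatch σ t = some k) (hk : (σ k).castSucc < i) :
    rankMatch (insertPerm j i σ) t = some (j.succAbove k) := by
  obtain ⟨hkA, hmin⟩ := rankMatch_eq_some_iff.mp h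
  rw [rankMatch_eq_some_iff, rankAvail_eq_insert_map ht hrun]
  refine ⟨Finset.mem_insert_of_mem (Finset.mem_map_of_mem _ hkA), fun v hv => ?_⟩
  rcases Finset.mem_insert.mp hv with rfl | hv
  · simpa [Fin.succAbove_of_castSucc_lt _ _ hk] using hk.le
  · obtain ⟨u, hu, rfl⟩ := Finset.mem_map.mp hv
    simpa using hmin u hu

lemma rankRun_insertPerm_eq_map
    (hgood : ∀ t < (j : ℕ), rankRun (insertPerm j i σ) t = (rankRun σ t).map j.succAboveEmb →
      rankMatch (insertPerm j i σ) t ≠ some j) :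
    ∀ t ≤ (j : ℕ), rankRun (insertPerm j i σ) t = (rankRun σ t).map j.succAboveEmb := by
  intro t ht
  induction t with
  | zero => simp [rankRun, greedyRun]
  | succ t ih =>
    have hrun := ih (by omega)
    have hjA : j ∈ rankAvail (insertPerm j i σ) t := by
      rw [rankAvail_eq_insert_map (by omega) hrun]
      exact Finset.mem_insert_self _ _
    obtain ⟨v, hv⟩ := exists_rankMatch_eq_some ⟨j, hjA⟩
    have hvj : v ≠ j := fun hvj => hgood t (by omega) hrun (hvj ▸ hv)
    obtain ⟨k, rfl⟩ := Fin.exists_succAbove_eq hvj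
    have hk := rankMatch_of_rankMatch_insertPerm (by omega) hrun hv
    rw [rankRun_succ_of_rankMatch_eq_some hv, rankRun_succ_of_rankMatch_eq_some hk,
      Finset.map_insert, hrun, Fin.coe_succAboveEmb]

end Simulation

section Counting

variable {m : ℕ}

lemma insertPerm_symm_castSucc {i j : Fin (m + 1)} {σ : Equiv.Perm (Fin m)} {r : Fin m}
    (hr : r.castSucc < i) : (insertPerm j i σ).symm r.castSucc = j.succAbove (σ.symm r) := by
  rw [Equiv.symm_apply_eq, insertPerm_apply_succAbove, Equiv.apply_symm_apply,
    Fin.succAbove_of_castSucc_lt _ _ hr]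

/-- A vertex of rank `r < i` that is still free at time `j` is preferred to `v_j` by every
earlier `u_t`, so `v_j` stays free before time `j` and the two runs agree up to then. -/
theorem rankMatch_insertPerm_iff {i j : Fin (m + 1)} {σ : Equiv.Perm (Fin m)} {r : Fin m}
    (hr : r.castSucc < i) :
    rankMatch (insertPerm j i σ) j = some ((insertPerm j i σ).symm r.castSucc) ↔
      rankMatch σ j = some (σ.symm r) := by
  rw [insertPerm_symm_castSucc hr]
  have hrank : insertPerm j i σ (j.succAbove (σ.symm r)) < insertPerm j i σ j := by
    simpa [Fin.succAbove_of_castSucc_lt _ _ hr] using hr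
  constructor
  · intro h
    obtain ⟨hadj, hfree, -⟩ := greedyMatchU_spec h
    refine rankMatch_of_rankMatch_insertPerm le_rfl (rankRun_insertPerm_eq_map ?_ _ le_rfl) h
    intro t ht _
    exact rankMatch_ne_of_lt (by have : (j : ℕ) ≤ _ := hadj; omega)
      (fun hmem => hfree (greedyRun_monotone ht.le hmem)) hrank
  · intro h
    obtain ⟨hadj, hfree, -⟩ := greedyMatchU_spec h
    have hrun := rankRun_insertPerm_eq_map (i := i) (fun t ht hrun => by
      refine rankMatch_ne_of_lt ?_ ?_ hrank
      · rw [le_val_succAbove_iff ht.le]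
        have : (j : ℕ) ≤ _ := hadj
        omega
      · rw [hrun]
        exact fun hmem => hfree (greedyRun_monotone ht.le ((Finset.mem_map' _).mp hmem))) _ le_rfl
    exact rankMatch_insertPerm_of_rankMatch le_rfl hrun h (by simpa using hr)

theorem card_filter_rankMatch_eq (i : Fin (m + 1)) (r : Fin m) (hr : r.castSucc < i) :
    (Finset.univ.filter fun π : Equiv.Perm (Fin (m + 1)) =>
      rankMatch π (π.symm i) = some (π.symm r.castSucc)).card =
    (Finset.univ.filter fun σ : Equiv.Perm (Fin m) => σ.symm r ∈ rankRun σ m).card := by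
  have hinsert : ∀ j σ, rankMatch (insertPerm j i σ) ((insertPerm j i σ).symm i) =
      some ((insertPerm j i σ).symm r.castSucc) ↔ rankMatch σ j = some (σ.symm r) := by
    intro j σ
    rw [insertPerm_symm_apply_self, rankMatch_insertPerm_iff hr]
  have herase : ∀ π : Equiv.Perm (Fin (m + 1)),
      rankMatch π (π.symm i) = some (π.symm r.castSucc) ↔
        rankMatch (erasePerm i π) (π.symm i) = some ((erasePerm i π).symm r) := fun π => by
    simpa [insertPerm_erasePerm] using hinsert (π.symm i) (erasePerm i π)
  refine Finset.card_bij (fun π _ => erasePerm i π) ?_ ?_ ?_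
  · intro π hπ
    have h := (herase π).mp (Finset.mem_filter.mp hπ).2
    have hlt : ((π.symm i : Fin (m + 1)) : ℕ) < m :=
      lt_of_le_of_lt (greedyMatchU_spec h).1 (Fin.is_lt _)
    exact Finset.mem_filter.mpr ⟨Finset.mem_univ _, mem_greedyRun_of_greedyMatchU_eq_some h hlt⟩
  · intro π₁ hπ₁ π₂ hπ₂ heq
    have h₁ := (herase π₁).mp (Finset.mem_filter.mp hπ₁).2
    have h₂ := (herase π₂).mp (Finset.mem_filter.mp hπ₂).2
    rw [heq] at h₁
    have hj : π₁.symm i = π₂.symm i := Fin.ext (greedyMatchU_eq_some_inj h₁ h₂)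
    rw [← insertPerm_erasePerm i π₁, ← insertPerm_erasePerm i π₂, hj, heq]
  · intro σ hσ
    obtain ⟨s, hs, h⟩ :=
      exists_greedyMatchU_eq_some_of_mem_greedyRun (Finset.mem_filter.mp hσ).2
    refine ⟨insertPerm ⟨s, by omega⟩ i σ, Finset.mem_filter.mpr
      ⟨Finset.mem_univ _, (hinsert _ σ).mpr h⟩, erasePerm_insertPerm _ _ _⟩

end Counting

/-- Fix `n ≥ 2` and `1 ≤ i < n` (1-indexed ranks). The number of permutations `π̂` of
`{1,…,n}` such that, under the Ranking greedy process on `MonotoneG` with `π̂`, the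
vertex of rank `i` is matched, say to `u_j`, and the vertex of rank `i+1` under `π̂` is
`v_j` (for that same index `j`), equals `a(n−1, i)`. -/
theorem stmt_15 (n i : ℕ) (h1 : 1 ≤ i) (h2 : i < n) :
    (Finset.univ.filter fun π : Equiv.Perm (Fin n) =>
      ∃ j : Fin n,
        greedyMatchU (monoAdj n) (fun v => π v) (j : ℕ) = some (π.symm ⟨i - 1, by omega⟩) ∧
        π.symm ⟨i, h2⟩ = j).card = aIdx (n - 1) i := by
  obtain ⟨m, rfl⟩ : ∃ m, n = m + 1 := ⟨n - 1, by omega⟩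
  have hr : (⟨i - 1, by omega⟩ : Fin m).castSucc < ⟨i, h2⟩ := Fin.lt_def.mpr (Nat.sub_lt h1 Nat.one_pos)
  rw [aIdx, Nat.add_sub_cancel]
  convert card_filter_rankMatch_eq _ _ hr using 2
  · refine Finset.filter_congr fun π _ => ?_
    simp [rankMatch]
  · refine Finset.filter_congr fun σ _ => ?_
    have hrank : ∀ v, (σ v : ℕ) = i - 1 ↔ v = σ.symm ⟨i - 1, by omega⟩ := fun v => by
      rw [Equiv.eq_symm_apply, Fin.ext_iff]
    simp only [rankMatched, rankRun, hrank, exists_eq_left]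
end
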